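/- Let n ≥ 2, N = 2n, h = 1/n, d ≥ 1, and c > 0 (so that A_h^D and A_h^P are invertible). Then the pair ((A_h^D)^{−1}, (A_h^P)^{−1}) is LFA-compatible; that is, (A_h^D)^{−1} = R_{o,h}^{⊗d} (A_h^P)^{−1} E_{o,h}^{⊗d}, and (A_h^P)^{−1} f ∈ range(E_{o,h}^{⊗d}) for every f ∈ range(E_{o,h}^{⊗d}). -/

import Mathlib

/-
The extension `E = E_{o,h}` intertwines the two one-dimensional operators, `T_h^P E = E T_h^D`:
the odd, `2n`-periodic extension of a vector vanishing at `0` and `n` commutes with the second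
difference. Kronecker products are multiplicative, so `E^{⊗d}` intertwines `A_h^P` and `A_h^D`
as well, and `R^{⊗d} E^{⊗d} = (R E)^{⊗d} = 1`. Since `T_h^P = BᵀB` for the scaled cyclic
difference `B`, the matrix `A_h^P` is positive definite for `c > 0`; then
`R^{⊗d} (A_h^P)⁻¹ E^{⊗d}` is a left inverse of `A_h^D`, and inverting the intertwining relation
gives `(A_h^P)⁻¹ E^{⊗d} = E^{⊗d} (A_h^D)⁻¹`, which is LFA-compatibility.
-/

open Matrix Finset

noncomputable section

/-- The tridiagonal matrix `tridiag(-1, 2, -1)` of size `m × m` (0-based indexing). -/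
def tridiag (m : ℕ) : Matrix (Fin m) (Fin m) ℝ :=
  Matrix.of fun i j =>
    if (i : ℕ) = (j : ℕ) then 2
    else if (i : ℕ) + 1 = (j : ℕ) ∨ (j : ℕ) + 1 = (i : ℕ) then -1 else 0

/-- The odd extension operator `E_{o,h} : ℝ^{n-1} → ℝ^{2n}`, sending the basis vector
`e_i^{n-1}` (math index `i = 1,…,n-1`) to `e_i^{2n} - e_{2n-i}^{2n}`.
In 0-based indexing, column `i` has entry `1` in row `i` and `-1` in row `2n - i - 2`. -/
def oddExt (n : ℕ) : Matrix (Fin (2 * n)) (Fin (n - 1)) ℝ :=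
  Matrix.of fun k i =>
    if (k : ℕ) = (i : ℕ) then 1
    else if (k : ℕ) + (i : ℕ) + 2 = 2 * n then -1 else 0

/-- The restriction operator `R_{o,h} = (1/2) E_{o,h}ᵀ`. -/
def oddRestr (n : ℕ) : Matrix (Fin (n - 1)) (Fin (2 * n)) ℝ :=
  (2 : ℝ)⁻¹ • (oddExt n)ᵀ

/-- The Dirichlet matrix `T_h^D = (1/h²) · tridiag(-1, 2, -1)`, with `h = 1/n`
(so `1/h² = n²`). -/
def ThD (n : ℕ) : Matrix (Fin (n - 1)) (Fin (n - 1)) ℝ :=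
  ((n : ℝ) ^ 2) • tridiag (n - 1)

/-- The periodic matrix `T_h^P = (1/h²) · (tridiag(-1,2,-1) - e₁ e_Nᵀ - e_N e₁ᵀ)`,
with `h = 1/n`, `N = 2n` (0-based: corners at `(0, 2n-1)` and `(2n-1, 0)`). -/
def ThP (n : ℕ) : Matrix (Fin (2 * n)) (Fin (2 * n)) ℝ :=
  ((n : ℝ) ^ 2) •
    (tridiag (2 * n)
      - Matrix.of (fun (i j : Fin (2 * n)) => if (i : ℕ) = 0 ∧ (j : ℕ) = 2 * n - 1 then 1 else 0)
      - Matrix.of (fun (i j : Fin (2 * n)) => if (i : ℕ) = 2 * n - 1 ∧ (j : ℕ) = 0 then 1 else 0))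

/-- The `d`-fold Kronecker power `X^{⊗d}`, where `ℝ^{a^d}` is identified with the
space of functions `(Fin d → Fin a) → ℝ`. -/
def kronPow {a b : ℕ} (d : ℕ) (X : Matrix (Fin a) (Fin b) ℝ) :
    Matrix (Fin d → Fin a) (Fin d → Fin b) ℝ :=
  Matrix.of fun i j => ∏ t, X (i t) (j t)

/-- `Σ_{t=1}^d I^{⊗(t-1)} ⊗ T ⊗ I^{⊗(d-t)}` in the function-indexed representation. -/
def kronSumId {m : ℕ} (d : ℕ) (T : Matrix (Fin m) (Fin m) ℝ) :
    Matrix (Fin d → Fin m) (Fin d → Fin m) ℝ :=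
  ∑ t : Fin d, Matrix.of fun i j =>
    T (i t) (j t) * ∏ s ∈ Finset.univ.erase t, (if i s = j s then (1 : ℝ) else 0)

/-- The `d`-dimensional discrete Dirichlet reaction-diffusion matrix
`A_h^D = Σ_j I^{⊗(j-1)} ⊗ T_h^D ⊗ I^{⊗(d-j)} + c I^{⊗d}`. -/
def AD (n d : ℕ) (c : ℝ) : Matrix (Fin d → Fin (n - 1)) (Fin d → Fin (n - 1)) ℝ :=
  kronSumId d (ThD n) + c • 1

/-- The `d`-dimensional discrete periodic reaction-diffusion matrix
`A_h^P = Σ_j I^{⊗(j-1)} ⊗ T_h^P ⊗ I^{⊗(d-j)} + c I^{⊗d}`. -/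
def AP (n d : ℕ) (c : ℝ) : Matrix (Fin d → Fin (2 * n)) (Fin d → Fin (2 * n)) ℝ :=
  kronSumId d (ThP n) + c • 1

/-- A pair `(M^D, M^P)` is LFA-compatible with respect to an extension `E` and a
restriction `R` if `M^D = R M^P E` and `M^P` maps `range E` into itself. -/
def LFACompatible {α β : Type*} [Fintype α] [Fintype β]
    (E : Matrix α β ℝ) (R : Matrix β α ℝ)
    (MD : Matrix β β ℝ) (MP : Matrix α α ℝ) : Prop :=
  MD = R * MP * E ∧ ∀ v ∈ Set.range E.mulVec, MP *ᵥ v ∈ Set.range E.mulVec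

namespace Matrix

section KroneckerProduct

variable {ι α β γ R : Type*} [Fintype ι] [CommSemiring R]

def kronProd (f : ι → Matrix α β R) : Matrix (ι → α) (ι → β) R :=
  of fun i j => ∏ t, f t (i t) (j t)

theorem kronProd_mul [DecidableEq ι] [Fintype β] (f : ι → Matrix α β R)
    (g : ι → Matrix β γ R) : kronProd f * kronProd g = kronProd fun t => f t * g t := by
  ext i j
  simp only [kronProd, mul_apply, of_apply, ← prod_mul_distrib]
  exact (Fintype.prod_sum fun t b => f t (i t) b * g t b (j t)).symm

theorem kronProd_transpose (f : ι → Matrix α β R) :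
    (kronProd f)ᵀ = kronProd fun t => (f t)ᵀ := rfl

theorem kronProd_one [DecidableEq α] : kronProd (1 : ι → Matrix α α R) = 1 := by
  ext i j
  by_cases h : i = j
  · subst h; simp [kronProd]
  · obtain ⟨t, ht⟩ := Function.ne_iff.mp h
    simp only [kronProd, of_apply, Pi.one_apply, one_apply_ne h]
    exact prod_eq_zero (mem_univ t) (one_apply_ne ht)

end KroneckerProduct

theorem inv_mul_eq_mul_inv_of_mul_eq {α β K : Type*} [Fintype α] [DecidableEq α]
    [Fintype β] [DecidableEq β] [CommRing K] {A : Matrix α α K} {B : Matrix β β K}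
    {E : Matrix α β K} {R : Matrix β α K} (hA : IsUnit A.det) (hRE : R * E = 1)
    (h : A * E = E * B) : A⁻¹ * E = E * B⁻¹ := by
  have hB : B * (R * A⁻¹ * E) = 1 := by
    rw [mul_eq_one_comm, Matrix.mul_assoc, ← h, Matrix.mul_assoc,
      nonsing_inv_mul_cancel_left _ _ hA, hRE]
  rw [← Matrix.mul_one (A⁻¹ * E), ← mul_nonsing_inv B (isUnit_det_of_right_inverse hB),
    ← Matrix.mul_assoc, Matrix.mul_assoc A⁻¹, ← h, nonsing_inv_mul_cancel_left _ _ hA]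

end Matrix

theorem LFACompatible.of_mul_eq {α β : Type*} [Fintype α] [Fintype β] [DecidableEq β]
    {E : Matrix α β ℝ} {R : Matrix β α ℝ} {MD : Matrix β β ℝ} {MP : Matrix α α ℝ}
    (hRE : R * E = 1) (h : MP * E = E * MD) : LFACompatible E R MD MP := by
  refine ⟨by rw [Matrix.mul_assoc, h, ← Matrix.mul_assoc, hRE, Matrix.one_mul], ?_⟩
  rintro _ ⟨w, rfl⟩
  exact ⟨MD *ᵥ w, by rw [mulVec_mulVec, mulVec_mulVec, h]⟩

theorem Fin.sum_ite_val_eq {M : Type*} [AddCommMonoid M] {m : ℕ} (a : ℕ) (f : Fin m → M) :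
    ∑ i : Fin m, (if (i : ℕ) = a then f i else 0) = if h : a < m then f ⟨a, h⟩ else 0 := by
  split_ifs with h
  · rw [sum_eq_single_of_mem ⟨a, h⟩ (mem_univ _) fun j _ hj =>
      if_neg fun hj' => hj (Fin.ext hj'), if_pos rfl]
  · exact sum_eq_zero fun i _ => if_neg (by omega)

theorem val_finRotate {m : ℕ} (i : Fin m) :
    (finRotate m i : ℕ) = if (i : ℕ) + 1 = m then 0 else (i : ℕ) + 1 := by
  obtain ⟨m, rfl⟩ := Nat.exists_eq_succ_of_ne_zero i.pos.ne'
  simp only [coe_finRotate, Fin.ext_iff, Fin.val_last, Nat.succ_eq_add_one, add_left_inj]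

theorem kronPow_eq_kronProd {a b : ℕ} (d : ℕ) (X : Matrix (Fin a) (Fin b) ℝ) :
    kronPow d X = kronProd fun _ => X := rfl

theorem kronPow_mul_kronPow {a b e : ℕ} (d : ℕ) (X : Matrix (Fin a) (Fin b) ℝ)
    (Y : Matrix (Fin b) (Fin e) ℝ) : kronPow d X * kronPow d Y = kronPow d (X * Y) :=
  kronProd_mul _ _

theorem kronPow_one (m d : ℕ) : kronPow d (1 : Matrix (Fin m) (Fin m) ℝ) = 1 :=
  kronProd_one

theorem kronSumId_eq_sum_kronProd {m : ℕ} (d : ℕ) (T : Matrix (Fin m) (Fin m) ℝ) :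
    kronSumId d T = ∑ t : Fin d, kronProd (Function.update 1 t T) := by
  refine sum_congr rfl fun t _ => ?_
  ext i j
  simp only [kronProd, of_apply, ← mul_prod_erase _ _ (mem_univ t), Function.update_self]
  congr 1
  refine prod_congr rfl fun s hs => ?_
  rw [Function.update_of_ne (ne_of_mem_erase hs), Pi.one_apply, one_apply]

theorem kronSumId_mul_kronPow {a b : ℕ} (d : ℕ) {TP : Matrix (Fin a) (Fin a) ℝ}
    {E : Matrix (Fin a) (Fin b) ℝ} {TD : Matrix (Fin b) (Fin b) ℝ} (h : TP * E = E * TD) :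
    kronSumId d TP * kronPow d E = kronPow d E * kronSumId d TD := by
  simp only [kronSumId_eq_sum_kronProd, kronPow_eq_kronProd, Matrix.sum_mul, Matrix.mul_sum,
    kronProd_mul]
  refine sum_congr rfl fun t _ => congrArg kronProd (funext fun s => ?_)
  by_cases hs : s = t
  · subst hs; simp [h]
  · simp [Function.update_of_ne hs]

theorem posSemidef_kronSumId_transpose_mul_self {m : ℕ} (d : ℕ)
    (B : Matrix (Fin m) (Fin m) ℝ) : (kronSumId d (Bᵀ * B)).PosSemidef := by
  rw [kronSumId_eq_sum_kronProd]
  refine posSemidef_sum _ fun t _ => ?_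
  set U : Fin d → Matrix (Fin m) (Fin m) ℝ := Function.update 1 t B
  have hU : (Function.update 1 t (Bᵀ * B) : Fin d → Matrix (Fin m) (Fin m) ℝ)
      = fun s => (U s)ᵀ * U s := by
    funext s
    by_cases hs : s = t
    · subst hs; simp [U]
    · simp [U, Function.update_of_ne hs]
  rw [hU, ← kronProd_mul, ← kronProd_transpose, ← conjTranspose_eq_transpose_of_trivial]
  exact posSemidef_conjTranspose_mul_self _

theorem oddExt_apply_eq_sub (n : ℕ) (k : Fin (2 * n)) (i : Fin (n - 1)) :
    oddExt n k i
      = (if (k : ℕ) = i then 1 else 0) - (if (k : ℕ) + i + 2 = 2 * n then 1 else 0) := by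
  have := i.isLt
  simp only [oddExt, of_apply]
  split_ifs <;> first | omega | norm_num

theorem mul_oddExt_apply {α : Type*} (n : ℕ) (X : Matrix α (Fin (2 * n)) ℝ) (k : α)
    (i : Fin (n - 1)) :
    (X * oddExt n) k i = X k ⟨i, by omega⟩ - X k ⟨2 * n - 2 - i, by omega⟩ := by
  have := i.isLt
  simp_rw [mul_apply, oddExt_apply_eq_sub, mul_sub, mul_ite, mul_one, mul_zero, sum_sub_distrib,
    show ∀ j : ℕ, (j + i + 2 = 2 * n ↔ j = 2 * n - 2 - i) from fun j => by omega,
    Fin.sum_ite_val_eq, dif_pos (show (i : ℕ) < 2 * n by omega),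
    dif_pos (show 2 * n - 2 - (i : ℕ) < 2 * n by omega)]

-- `k + 2 ≤ 2 * n` excludes the last row, where `2 * n - 2 - k` would truncate to `0`.
theorem oddExt_mul_apply {β : Type*} (n : ℕ) (Y : Matrix (Fin (n - 1)) β ℝ) (k : Fin (2 * n))
    (j : β) :
    (oddExt n * Y) k j = (if h : (k : ℕ) < n - 1 then Y ⟨k, h⟩ j else 0)
      - (if h : n ≤ k ∧ k + 2 ≤ 2 * n then Y ⟨2 * n - 2 - k, by omega⟩ j else 0) := by
  simp_rw [mul_apply, oddExt_apply_eq_sub, sub_mul, ite_mul, one_mul, zero_mul, sum_sub_distrib,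
    eq_comm (a := (k : ℕ)), Fin.sum_ite_val_eq]
  congr 1
  by_cases h : n ≤ k ∧ k + 2 ≤ 2 * n
  · simp_rw [show ∀ i : ℕ, ((k : ℕ) + i + 2 = 2 * n ↔ i = 2 * n - 2 - k) from
        fun i => by omega, Fin.sum_ite_val_eq, dif_pos h,
      dif_pos (show 2 * n - 2 - (k : ℕ) < n - 1 by omega)]
  · rw [dif_neg h]
    exact sum_eq_zero fun i _ => if_neg (by omega)

theorem oddRestr_mul_oddExt (n : ℕ) : oddRestr n * oddExt n = 1 := by
  ext i j
  have := i.isLt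
  have := j.isLt
  rw [oddRestr, Matrix.smul_mul, Matrix.smul_apply, mul_oddExt_apply]
  simp only [transpose_apply, oddExt, of_apply, one_apply, Fin.ext_iff, smul_eq_mul]
  split_ifs <;> first | omega | norm_num

theorem ThP_mul_oddExt (n : ℕ) : ThP n * oddExt n = oddExt n * ThD n := by
  rw [ThP, ThD, Matrix.smul_mul, Matrix.mul_smul]
  congr 1
  ext k i
  have := i.isLt
  have := k.isLt
  simp only [mul_oddExt_apply, oddExt_mul_apply, tridiag, Matrix.sub_apply, of_apply]
  obtain hk | hk : (k : ℕ) < n - 1 ∨ n - 1 ≤ k := by omega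
  all_goals
    simp (disch := omega) only [if_neg, dif_neg, dif_pos]
    split_ifs <;> first | omega | norm_num

theorem ThP_eq_transpose_mul_self (n : ℕ) :
    ThP n = ((n : ℝ) • (1 - (finRotate (2 * n)).permMatrix ℝ))ᵀ
      * ((n : ℝ) • (1 - (finRotate (2 * n)).permMatrix ℝ)) := by
  set P := (finRotate (2 * n)).permMatrix ℝ
  have hP : Pᵀ * P = 1 := by
    rw [transpose_permMatrix, ← permMatrix_mul, mul_inv_cancel, permMatrix_one]
  have hB : (1 - P)ᵀ * (1 - P) = 1 + 1 - P - Pᵀ := by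
    rw [transpose_sub, transpose_one, sub_mul, mul_sub, mul_sub, hP, Matrix.one_mul,
      Matrix.mul_one, Matrix.one_mul]
    abel
  rw [transpose_smul, Matrix.smul_mul, Matrix.mul_smul, smul_smul, hB, ThP, ← sq]
  congr 1
  ext a b
  have := a.isLt
  have := b.isLt
  simp only [P, Matrix.sub_apply, Matrix.add_apply, one_apply, transpose_apply, tridiag, of_apply,
    Equiv.Perm.permMatrix, PEquiv.toMatrix_apply, Equiv.toPEquiv_apply, Option.mem_def,
    Option.some_inj, Fin.ext_iff, val_finRotate]
  split_ifs <;> first | omega | norm_num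

theorem kronPow_oddRestr_mul_kronPow_oddExt (n d : ℕ) :
    kronPow d (oddRestr n) * kronPow d (oddExt n) = 1 := by
  rw [kronPow_mul_kronPow, oddRestr_mul_oddExt, kronPow_one]

theorem AP_mul_kronPow_oddExt (n d : ℕ) (c : ℝ) :
    AP n d c * kronPow d (oddExt n) = kronPow d (oddExt n) * AD n d c := by
  rw [AP, AD, Matrix.add_mul, Matrix.mul_add, kronSumId_mul_kronPow d (ThP_mul_oddExt n),
    Matrix.smul_mul, Matrix.mul_smul, Matrix.one_mul, Matrix.mul_one]

theorem AP_posDef (n d : ℕ) {c : ℝ} (hc : 0 < c) : (AP n d c).PosDef := by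
  rw [AP, ThP_eq_transpose_mul_self, smul_one_eq_diagonal]
  exact PosDef.posSemidef_add (posSemidef_kronSumId_transpose_mul_self d _)
    (PosDef.diagonal fun _ => hc)

theorem inv_LFACompatible_general (n d : ℕ) (c : ℝ) (hc : 0 < c) :
    LFACompatible (kronPow d (oddExt n)) (kronPow d (oddRestr n))
      (AD n d c)⁻¹ (AP n d c)⁻¹ := by
  have hRE := kronPow_oddRestr_mul_kronPow_oddExt n d
  have hAP : IsUnit (AP n d c).det := (isUnit_iff_isUnit_det _).mp (AP_posDef n d hc).isUnit
  exact .of_mul_eq hRE (inv_mul_eq_mul_inv_of_mul_eq hAP hRE (AP_mul_kronPow_oddExt n d c))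

/-- for `c > 0`, the pair `((A_h^D)⁻¹, (A_h^P)⁻¹)` is LFA-compatible. -/
theorem inv_LFACompatible (n d : ℕ) (hn : 2 ≤ n) (hd : 1 ≤ d) (c : ℝ) (hc : 0 < c) :
    LFACompatible (kronPow d (oddExt n)) (kronPow d (oddRestr n))
      (AD n d c)⁻¹ (AP n d c)⁻¹ :=
  inv_LFACompatible_general n d c hc
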